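/- Srivastava-Agarwal type generating function for the Hahn (Al-Salam-Carlitz) polynomials: ∑_{n=0}^∞ (λ;q)_n φ_n^{(α)}(x|q) t^n/(q;q)_n = ((λt;q)_∞/(t;q)_∞) · ∑_{n=0}^∞ ((λ;q)_n (α;q)_n / ((q;q)_n (λt;q)_n)) (xt)^n, valid for max{|t|, |xt|} < 1. -/

import Mathlib

noncomputable def qPoch (x q : ℂ) (n : ℕ) : ℂ := ∏ j ∈ Finset.range n, (1 - x * q ^ j)

noncomputable def qPochInf (x q : ℂ) : ℂ := ∏' j : ℕ, (1 - x * q ^ j)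

noncomputable def qBinom (q : ℂ) (n k : ℕ) : ℂ := qPoch q q n / (qPoch q q k * qPoch q q (n - k))

noncomputable def Dq (q : ℂ) (f : ℂ → ℂ) : ℂ → ℂ := fun a => (f a - f (q * a)) / ((1 - q) * a)

noncomputable def Dqinv (q : ℂ) (f : ℂ → ℂ) : ℂ → ℂ := fun a => (f (q⁻¹ * a) - f a) / ((q⁻¹ - 1) * a)

noncomputable def mPoch {m : ℕ} (a : Fin m → ℂ) (q : ℂ) (k : ℕ) : ℂ := ∏ i, qPoch (a i) q k

noncomputable def phi {r : ℕ} (a : Fin (r + 1) → ℂ) (b : Fin r → ℂ) (q x y : ℂ) (n : ℕ) : ℂ :=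
  ∑ k ∈ Finset.range (n + 1), qBinom q n k * (mPoch a q k / mPoch b q k) * x ^ k * y ^ (n - k)

noncomputable def psi {r : ℕ} (a : Fin (r + 1) → ℂ) (b : Fin r → ℂ) (q x y : ℂ) (n : ℕ) : ℂ :=
  ∑ k ∈ Finset.range (n + 1), qBinom q n k * (mPoch a q k / mPoch b q k) *
    q ^ ((((k + 1).choose 2 : ℕ) : ℤ) - (n : ℤ) * (k : ℤ)) * x ^ k * y ^ (n - k)

noncomputable def hahnPhi (α x q : ℂ) (n : ℕ) : ℂ :=
  ∑ k ∈ Finset.range (n + 1), qBinom q n k * qPoch α q k * x ^ k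

/-!
The q-binomial theorem `∑ (a;q)_n / (q;q)_n s^n = (as;q)_∞ / (s;q)_∞` follows from the functional
equation `(1 - s) G(s) = (1 - as) G(qs)` of the left side `G`, iterated `N` times, letting
`N → ∞` (where `G(q^N s) → G(0) = 1`).

Expanding `φ_n` and splitting `(λ;q)_{k+m} = (λ;q)_k (λq^k;q)_m` turns the generating function into
an absolutely convergent double series over `(k, m)` with `k + m = n`. Summing over `m` first is the
q-binomial theorem with `a = λq^k`, which gives
`(λq^k t;q)_∞ / (t;q)_∞ = (λt;q)_∞ / ((λt;q)_k (t;q)_∞)`.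
-/

open Finset Filter Topology

lemma qPoch_succ (a q : ℂ) (n : ℕ) : qPoch a q (n + 1) = qPoch a q n * (1 - a * q ^ n) :=
  prod_range_succ _ n

lemma qPoch_add (a q : ℂ) (k m : ℕ) :
    qPoch a q (k + m) = qPoch a q k * qPoch (a * q ^ k) q m := by
  rw [qPoch, prod_range_add]
  congr 1
  exact prod_congr rfl fun j _ => by rw [pow_add]; ring

section QPochhammer

variable {q : ℂ}

lemma one_sub_mul_pow_ne_zero {c : ℂ} (hc : ‖c‖ < 1) (hq : ‖q‖ ≤ 1) (j : ℕ) :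
    1 - c * q ^ j ≠ 0 := by
  refine sub_ne_zero.2 fun h => ?_
  have : ‖c * q ^ j‖ < 1 := by
    rw [norm_mul, norm_pow]
    exact (mul_le_of_le_one_right (norm_nonneg c) (pow_le_one₀ (norm_nonneg q) hq)).trans_lt hc
  simp [← h] at this

lemma qPoch_ne_zero {c : ℂ} (hc : ‖c‖ < 1) (hq : ‖q‖ ≤ 1) (n : ℕ) : qPoch c q n ≠ 0 :=
  prod_ne_zero_iff.2 fun j _ => one_sub_mul_pow_ne_zero hc hq j

lemma summable_norm_neg_mul_pow (c : ℂ) (hq : ‖q‖ < 1) :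
    Summable fun j : ℕ => ‖-(c * q ^ j)‖ := by
  simpa only [norm_neg, norm_mul, norm_pow] using
    (summable_geometric_of_lt_one (norm_nonneg q) hq).mul_left ‖c‖

lemma multipliable_one_sub_mul_pow (c : ℂ) (hq : ‖q‖ < 1) :
    Multipliable fun j : ℕ => 1 - c * q ^ j := by
  simpa only [← sub_eq_add_neg] using
    multipliable_one_add_of_summable (summable_norm_neg_mul_pow c hq)

lemma qPochInf_ne_zero {c : ℂ} (hq : ‖q‖ < 1) (h : ∀ j, 1 - c * q ^ j ≠ 0) :
    qPochInf c q ≠ 0 := by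
  simp only [sub_eq_add_neg] at h
  simpa only [qPochInf, ← sub_eq_add_neg] using
    tprod_one_add_ne_zero_of_summable h (summable_norm_neg_mul_pow c hq)

lemma tendsto_qPoch (c : ℂ) (hq : ‖q‖ < 1) :
    Tendsto (qPoch c q) atTop (𝓝 (qPochInf c q)) :=
  (multipliable_one_sub_mul_pow c hq).hasProd.tendsto_prod_nat

lemma qPochInf_eq_qPoch_mul (c : ℂ) (hq : ‖q‖ < 1) (k : ℕ) :
    qPochInf c q = qPoch c q k * qPochInf (c * q ^ k) q := by
  have hshift : (fun j : ℕ => 1 - c * q ^ (j + k)) = fun j : ℕ => 1 - c * q ^ k * q ^ j := by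
    funext j; rw [add_comm, pow_add, mul_assoc]
  have hmul : Multipliable fun j : ℕ => 1 - c * q ^ (j + k) :=
    hshift ▸ multipliable_one_sub_mul_pow (c * q ^ k) hq
  rw [qPochInf, ← Multipliable.prod_mul_tprod_nat_mul' (f := fun j => 1 - c * q ^ j) hmul,
    hshift, qPoch, qPochInf]

lemma exists_norm_qPoch_le (c : ℂ) (hq : ‖q‖ < 1) : ∃ C, ∀ n, ‖qPoch c q n‖ ≤ C :=
  let ⟨C, hC⟩ := (tendsto_qPoch c hq).norm.bddAbove_range
  ⟨C, fun n => hC ⟨n, rfl⟩⟩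

lemma exists_norm_inv_qPoch_le {c : ℂ} (hc : ‖c‖ < 1) (hq : ‖q‖ < 1) :
    ∃ C, ∀ n, ‖(qPoch c q n)⁻¹‖ ≤ C :=
  let ⟨C, hC⟩ := ((tendsto_qPoch c hq).inv₀
    (qPochInf_ne_zero hq (one_sub_mul_pow_ne_zero hc hq.le))).norm.bddAbove_range
  ⟨C, fun n => hC ⟨n, rfl⟩⟩

end QPochhammer

section QBinomial

variable {q : ℂ}

noncomputable def qBinomSeries (a q s : ℂ) : ℂ := ∑' n : ℕ, qPoch a q n / qPoch q q n * s ^ n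

lemma exists_norm_qPoch_div_qPoch_le (a : ℂ) (hq : ‖q‖ < 1) :
    ∃ C, ∀ n, ‖qPoch a q n / qPoch q q n‖ ≤ C := by
  obtain ⟨A, hA⟩ := exists_norm_qPoch_le a hq
  obtain ⟨B, hB⟩ := exists_norm_inv_qPoch_le hq hq
  refine ⟨A * B, fun n => ?_⟩
  rw [div_eq_mul_inv, norm_mul]
  exact mul_le_mul (hA n) (hB n) (norm_nonneg _) ((norm_nonneg _).trans (hA 0))

lemma summable_qBinomSeries (a : ℂ) (hq : ‖q‖ < 1) {s : ℂ} (hs : ‖s‖ < 1) :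
    Summable fun n : ℕ => qPoch a q n / qPoch q q n * s ^ n := by
  obtain ⟨C, hC⟩ := exists_norm_qPoch_div_qPoch_le a hq
  refine .of_norm_bounded ((summable_geometric_of_lt_one (norm_nonneg s) hs).mul_left C)
    fun n => ?_
  rw [norm_mul, norm_pow]
  exact mul_le_mul_of_nonneg_right (hC n) (by positivity)

lemma qPoch_div_qPoch_succ_mul (a : ℂ) (hq : ‖q‖ < 1) (n : ℕ) :
    qPoch a q (n + 1) / qPoch q q (n + 1) * (1 - q ^ (n + 1))
      = qPoch a q n / qPoch q q n * (1 - a * q ^ n) := by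
  rw [qPoch_succ, qPoch_succ, pow_succ', ← div_div,
    div_mul_cancel₀ _ (one_sub_mul_pow_ne_zero hq hq.le n)]
  ring

lemma one_sub_mul_qBinomSeries (a : ℂ) (hq : ‖q‖ < 1) {s : ℂ} (hs : ‖s‖ < 1) :
    (1 - s) * qBinomSeries a q s = (1 - a * s) * qBinomSeries a q (q * s) := by
  set c : ℕ → ℂ := fun n => qPoch a q n / qPoch q q n
  have hqs : ‖q * s‖ < 1 := by
    rw [norm_mul]
    exact (mul_le_of_le_one_right (norm_nonneg q) hs.le).trans_lt hq
  have S₁ := summable_qBinomSeries a hq hs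
  have S₂ := summable_qBinomSeries a hq hqs
  have hdiff : qBinomSeries a q s - qBinomSeries a q (q * s)
      = ∑' n, c (n + 1) * (1 - q ^ (n + 1)) * s ^ (n + 1) := by
    rw [qBinomSeries, qBinomSeries, ← S₁.tsum_sub S₂, (S₁.sub S₂).tsum_eq_zero_add]
    simp only [pow_zero, mul_one, sub_self, zero_add, mul_pow]
    exact tsum_congr fun n => by ring
  have hshift : ∑' n, c (n + 1) * (1 - q ^ (n + 1)) * s ^ (n + 1)
      = s * qBinomSeries a q s - a * s * qBinomSeries a q (q * s) := by
    rw [qBinomSeries, qBinomSeries, ← tsum_mul_left, ← tsum_mul_left,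
      ← (S₁.mul_left s).tsum_sub (S₂.mul_left (a * s))]
    refine tsum_congr fun n => ?_
    rw [qPoch_div_qPoch_succ_mul a hq n]
    ring
  linear_combination hdiff.trans hshift

lemma tendsto_qBinomSeries_pow_mul (a : ℂ) (hq : ‖q‖ < 1) {t : ℂ} (ht : ‖t‖ < 1) :
    Tendsto (fun N : ℕ => qBinomSeries a q (q ^ N * t)) atTop (𝓝 1) := by
  obtain ⟨C, hC⟩ := exists_norm_qPoch_div_qPoch_le a hq
  have hzero : Tendsto (fun N : ℕ => q ^ N * t) atTop (𝓝 0) := by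
    simpa using (tendsto_pow_atTop_nhds_zero_of_norm_lt_one hq).mul_const t
  have hlim : ∑' n : ℕ, qPoch a q n / qPoch q q n * 0 ^ n = 1 := by
    rw [tsum_eq_single 0 fun n hn => by simp [hn]]
    simp [qPoch]
  rw [← hlim]
  refine tendsto_tsum_of_dominated_convergence
    ((summable_geometric_of_lt_one (norm_nonneg t) ht).mul_left C)
    (fun n => (hzero.pow n).const_mul _) (.of_forall fun N n => ?_)
  rw [norm_mul, norm_pow, norm_mul, norm_pow]
  gcongr
  · exact (norm_nonneg _).trans (hC 0)
  · exact hC n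
  · exact mul_le_of_le_one_left (norm_nonneg t) (pow_le_one₀ (norm_nonneg q) hq.le)

lemma qPoch_mul_qBinomSeries (a : ℂ) (hq : ‖q‖ < 1) {t : ℂ} (ht : ‖t‖ < 1) (N : ℕ) :
    qPoch t q N * qBinomSeries a q t = qPoch (a * t) q N * qBinomSeries a q (q ^ N * t) := by
  induction N with
  | zero => simp [qPoch]
  | succ N ih =>
    have hN : ‖q ^ N * t‖ < 1 := by
      rw [norm_mul, norm_pow]
      exact (mul_le_of_le_one_left (norm_nonneg t) (pow_le_one₀ (norm_nonneg q) hq.le)).trans_lt ht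
    have hfun := one_sub_mul_qBinomSeries a hq hN
    rw [← mul_assoc q, ← pow_succ'] at hfun
    rw [qPoch_succ, qPoch_succ]
    linear_combination (1 - t * q ^ N) * ih + qPoch (a * t) q N * hfun

theorem qPochInf_mul_qBinomSeries (a : ℂ) (hq : ‖q‖ < 1) {t : ℂ} (ht : ‖t‖ < 1) :
    qPochInf t q * qBinomSeries a q t = qPochInf (a * t) q := by
  have hlim : Tendsto (fun N => qPoch (a * t) q N * qBinomSeries a q (q ^ N * t)) atTop
      (𝓝 (qPochInf (a * t) q * 1)) :=
    (tendsto_qPoch (a * t) hq).mul (tendsto_qBinomSeries_pow_mul a hq ht)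
  rw [← mul_one (qPochInf (a * t) q)]
  refine tendsto_nhds_unique ((tendsto_qPoch t hq).mul_const _) (hlim.congr fun N => ?_)
  exact (qPoch_mul_qBinomSeries a hq ht N).symm

end QBinomial

theorem Summable.tsum_eq_tsum_sum_antidiagonal {A α : Type*} [AddCommMonoid A] [HasAntidiagonal A]
    [AddCommMonoid α] [TopologicalSpace α] [ContinuousAdd α] [T3Space α] {F : A × A → α}
    (h : Summable F) : ∑' p, F p = ∑' n, ∑ kl ∈ antidiagonal n, F kl :=
  ((HasAntidiagonal.sigmaAntidiagonalEquivProd.hasSum_iff.2 h.hasSum).sigma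
    fun n => Finset.hasSum (antidiagonal n) F).tsum_eq.symm

section HahnGeneratingFunction

variable {q : ℂ}

noncomputable def hahnDoubleTerm (l α x t q : ℂ) (p : ℕ × ℕ) : ℂ :=
  qPoch l q (p.1 + p.2) * qPoch α q p.1 / (qPoch q q p.1 * qPoch q q p.2) * (x * t) ^ p.1 * t ^ p.2

lemma summable_hahnDoubleTerm (l α : ℂ) (hq : ‖q‖ < 1) {x t : ℂ} (ht : ‖t‖ < 1)
    (hxt : ‖x * t‖ < 1) : Summable (hahnDoubleTerm l α x t q) := by
  obtain ⟨L, hL⟩ := exists_norm_qPoch_le l hq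
  obtain ⟨A, hA⟩ := exists_norm_qPoch_le α hq
  obtain ⟨B, hB⟩ := exists_norm_inv_qPoch_le hq hq
  have hgeom : Summable fun p : ℕ × ℕ => ‖x * t‖ ^ p.1 * ‖t‖ ^ p.2 :=
    (summable_geometric_of_lt_one (norm_nonneg _) hxt).mul_of_nonneg
      (summable_geometric_of_lt_one (norm_nonneg _) ht)
      (fun _ => by positivity) (fun _ => by positivity)
  refine .of_norm_bounded (hgeom.mul_left (L * A * B * B)) fun ⟨k, m⟩ => ?_
  have hL0 : 0 ≤ L := (norm_nonneg _).trans (hL 0)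
  have hA0 : 0 ≤ A := (norm_nonneg _).trans (hA 0)
  have hB0 : 0 ≤ B := (norm_nonneg _).trans (hB 0)
  have hLkm := hL (k + m)
  have hAk := hA k
  have hBk := hB k
  have hBm := hB m
  calc ‖hahnDoubleTerm l α x t q (k, m)‖
      = ‖qPoch l q (k + m)‖ * ‖qPoch α q k‖ * (‖(qPoch q q k)⁻¹‖ * ‖(qPoch q q m)⁻¹‖)
          * ‖x * t‖ ^ k * ‖t‖ ^ m := by
        simp only [hahnDoubleTerm, div_eq_mul_inv, mul_inv, norm_mul, norm_pow]
    _ ≤ L * A * (B * B) * ‖x * t‖ ^ k * ‖t‖ ^ m := by gcongr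
    _ = _ := by ring

lemma sum_antidiagonal_hahnDoubleTerm (l α x t : ℂ) (hq : ‖q‖ < 1) (n : ℕ) :
    ∑ kl ∈ antidiagonal n, hahnDoubleTerm l α x t q kl
      = qPoch l q n * hahnPhi α x q n * t ^ n / qPoch q q n := by
  rw [Nat.sum_antidiagonal_eq_sum_range_succ_mk, hahnPhi, mul_sum, sum_mul, sum_div]
  refine sum_congr rfl fun k hk => ?_
  obtain ⟨m, rfl⟩ := Nat.exists_eq_add_of_le (Nat.lt_succ_iff.1 (mem_range.1 hk))
  have hk : qPoch q q k ≠ 0 := qPoch_ne_zero hq hq.le k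
  have hm : qPoch q q m ≠ 0 := qPoch_ne_zero hq hq.le m
  have hkm : qPoch q q (k + m) ≠ 0 := qPoch_ne_zero hq hq.le (k + m)
  simp only [hahnDoubleTerm, qBinom, Nat.add_sub_cancel_left]
  field_simp
  ring

lemma tsum_hahnDoubleTerm_fst (l α x : ℂ) (hq : ‖q‖ < 1) {t : ℂ} (ht : ‖t‖ < 1) (k : ℕ)
    (hlt : qPoch (l * t) q k ≠ 0) :
    ∑' m, hahnDoubleTerm l α x t q (k, m)
      = qPochInf (l * t) q / qPochInf t q
          * (qPoch l q k * qPoch α q k / (qPoch q q k * qPoch (l * t) q k) * (x * t) ^ k) := by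
  have hsplit : qPochInf (l * t) q = qPoch (l * t) q k * qPochInf (l * q ^ k * t) q := by
    rw [qPochInf_eq_qPoch_mul _ hq k, mul_right_comm]
  have hbinom := qPochInf_mul_qBinomSeries (l * q ^ k) hq ht
  have hinf : qPochInf t q ≠ 0 := qPochInf_ne_zero hq (one_sub_mul_pow_ne_zero ht hq.le)
  have hk : qPoch q q k ≠ 0 := qPoch_ne_zero hq hq.le k
  have hterm : ∑' m, hahnDoubleTerm l α x t q (k, m)
      = qPoch l q k * qPoch α q k / qPoch q q k * (x * t) ^ k * qBinomSeries (l * q ^ k) q t := by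
    rw [qBinomSeries, ← tsum_mul_left]
    refine tsum_congr fun m => ?_
    simp only [hahnDoubleTerm, qPoch_add]
    ring
  rw [hterm, hsplit, ← hbinom]
  generalize qPoch (l * t) q k = P at hlt ⊢
  field_simp

end HahnGeneratingFunction

theorem stmt19_general (q l α x t : ℂ) (hq1 : ‖q‖ < 1)
    (ht : ‖t‖ < 1) (hxt : ‖x * t‖ < 1)
    (hlt : ∀ n : ℕ, qPoch (l * t) q n ≠ 0) :
    ∑' n : ℕ, qPoch l q n * hahnPhi α x q n * t ^ n / qPoch q q n
      = (qPochInf (l * t) q / qPochInf t q)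
          * ∑' n : ℕ,
              (qPoch l q n * qPoch α q n / (qPoch q q n * qPoch (l * t) q n))
                * (x * t) ^ n := by
  have hF := summable_hahnDoubleTerm l α hq1 ht hxt
  calc ∑' n : ℕ, qPoch l q n * hahnPhi α x q n * t ^ n / qPoch q q n
      = ∑' n, ∑ kl ∈ antidiagonal n, hahnDoubleTerm l α x t q kl :=
        tsum_congr fun n => (sum_antidiagonal_hahnDoubleTerm l α x t hq1 n).symm
    _ = ∑' k, ∑' m, hahnDoubleTerm l α x t q (k, m) := by
        rw [← hF.tsum_eq_tsum_sum_antidiagonal, hF.tsum_prod]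
    _ = _ := by
        rw [tsum_congr fun k => tsum_hahnDoubleTerm_fst l α x hq1 ht k (hlt k), tsum_mul_left]

/-- Srivastava-Agarwal type generating function for the Hahn polynomials. -/
theorem stmt19 (q l α x t : ℂ) (hq0 : q ≠ 0) (hq1 : ‖q‖ < 1)
    (ht : ‖t‖ < 1) (hxt : ‖x * t‖ < 1)
    (hlt : ∀ n : ℕ, qPoch (l * t) q n ≠ 0) :
    ∑' n : ℕ, qPoch l q n * hahnPhi α x q n * t ^ n / qPoch q q n
      = (qPochInf (l * t) q / qPochInf t q)
          * ∑' n : ℕ,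
              (qPoch l q n * qPoch α q n / (qPoch q q n * qPoch (l * t) q n))
                * (x * t) ^ n :=
  stmt19_general q l α x t hq1 ht hxt hlt
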